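/- In 𝒰, for all i ≠ j in I and all r, s ∈ ℕ one has [b_{i,r+1}, b_{j,s}] = [b_{i,r}, b_{j,s+1}]. -/

import Mathlib

noncomputable section

/-- Data of a symmetrizable generalized Cartan matrix `(c_{ij})` (of finite type size bounds)
together with a positive symmetrizer `(d_i)`. -/
structure CartanData (I : Type) [Fintype I] : Type where
  c : I → I → ℤ
  d : I → ℝ
  c_diag : ∀ i, c i i = 2
  c_nonpos : ∀ i j, i ≠ j → c i j ≤ 0
  c_zero_iff : ∀ i j, c i j = 0 ↔ c j i = 0
  c_bound : ∀ i j, i ≠ j → c i j * c j i ≤ 3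
  d_pos : ∀ i, 0 < d i
  d_symm : ∀ i j, d i * (c i j : ℝ) = d j * (c j i : ℝ)

/-- The pairing `(α_i, α_j) = d_i · c_{ij}`. -/
def CartanData.al {I : Type} [Fintype I] (A : CartanData I) (i j : I) : ℝ :=
  A.d i * (A.c i j : ℝ)

/-- Generators for Drinfeld-type presentations: `h i r` stands for `h_{i,2r+1}` and
`b i r` stands for `b_{i,r}`. -/
inductive TYGen (I : Type) : Type
  | h : I → ℕ → TYGen I
  | b : I → ℕ → TYGen I

section Algebras

variable {I : Type} [Fintype I] [DecidableEq I]

/-- The element `h_{i,r}` of the free algebra, for `r : ℤ`, with the conventions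
`h_{i,-1} = 1` and `h_{i,r} = 0` for `r` even or `r < -1`. -/
def TYh (i : I) (r : ℤ) : FreeAlgebra ℂ (TYGen I) :=
  if r = -1 then 1
  else if 0 ≤ r ∧ r % 2 = 1 then FreeAlgebra.ι ℂ (TYGen.h i ((r - 1) / 2).toNat)
  else 0

/-- The generator `b_{i,r}` of the free algebra. -/
def TYb (i : I) (r : ℕ) : FreeAlgebra ℂ (TYGen I) := FreeAlgebra.ι ℂ (TYGen.b i r)

/-- The generator `h_{i,2r+1}` of the free algebra. -/
def TYhodd (i : I) (r : ℕ) : FreeAlgebra ℂ (TYGen I) := FreeAlgebra.ι ℂ (TYGen.h i r)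

/-- The element `h_{i,n}` of the free algebra, `n : ℕ`, with the convention `h_{i,2r} = 0`. -/
def TYhnat (i : I) (n : ℕ) : FreeAlgebra ℂ (TYGen I) :=
  if n % 2 = 1 then FreeAlgebra.ι ℂ (TYGen.h i ((n - 1) / 2)) else 0

/-- Defining relations of the twisted Yangian `ᵢY` in Drinfeld presentation. -/
inductive TYRel (A : CartanData I) : FreeAlgebra ℂ (TYGen I) → FreeAlgebra ℂ (TYGen I) → Prop
  | ty0 (i j : I) (r s : ℤ) : TYRel A ⁅TYh i r, TYh j s⁆ 0
  | ty1 (i j : I) (r s : ℕ) :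
      TYRel A (⁅TYh i ((r : ℤ) + 1), TYb j s⁆ - ⁅TYh i ((r : ℤ) - 1), TYb j (s + 2)⁆)
        ((A.al i j : ℂ) •
            (TYh i ((r : ℤ) - 1) * TYb j (s + 1) + TYb j (s + 1) * TYh i ((r : ℤ) - 1))
          + (((A.al i j : ℂ) ^ 2 / 4) • ⁅TYh i ((r : ℤ) - 1), TYb j s⁆))
  | ty2 (i j : I) (r s : ℕ) :
      TYRel A (⁅TYb i (r + 1), TYb j s⁆ - ⁅TYb i r, TYb j (s + 1)⁆)
        (((A.al i j : ℂ) / 2) • (TYb i r * TYb j s + TYb j s * TYb i r)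
          - (if i = j then (2 : ℂ) * (-1 : ℂ) ^ s else 0) • TYh i ((r : ℤ) + (s : ℤ) + 1))
  | serre0 (i j : I) (hc : A.c i j = 0) : TYRel A ⁅TYb i 0, TYb j 0⁆ 0
  | serre1 (i j : I) (hc : A.c i j = -1) :
      TYRel A ⁅TYb i 0, ⁅TYb i 0, TYb j 0⁆⁆ ((-(A.d i : ℂ)) • TYb j 0)
  | serre2 (i j : I) (hc : A.c i j = -2) :
      TYRel A ⁅TYb i 0, ⁅TYb i 0, ⁅TYb i 0, TYb j 0⁆⁆⁆
        (((-4 : ℂ) * (A.d i : ℂ)) • ⁅TYb i 0, TYb j 0⁆)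
  | serre3 (i j : I) (hc : A.c i j = -3) :
      TYRel A ⁅TYb i 0, ⁅TYb i 0, ⁅TYb i 0, ⁅TYb i 0, TYb j 0⁆⁆⁆⁆
        (((-10 : ℂ) * (A.d i : ℂ)) • ⁅TYb i 0, ⁅TYb i 0, TYb j 0⁆⁆
          + ((-9 : ℂ) * (A.d i : ℂ) ^ 2) • TYb j 0)

/-- The twisted Yangian `ᵢY` in Drinfeld presentation. -/
abbrev TY (A : CartanData I) : Type := RingQuot (TYRel A)

/-- The generator `h_{i,2r+1}` of the twisted Yangian `ᵢY`. -/
def tyH (A : CartanData I) (i : I) (r : ℕ) : TY A :=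
  RingQuot.mkAlgHom ℂ (TYRel A) (TYhodd i r)

/-- The generator `b_{i,r}` of the twisted Yangian `ᵢY`. -/
def tyB (A : CartanData I) (i : I) (r : ℕ) : TY A :=
  RingQuot.mkAlgHom ℂ (TYRel A) (TYb i r)

/-- Defining relations of the algebra `𝔅` (the presentation of `U(g[z]^ω̌)`). -/
inductive BRel (A : CartanData I) : FreeAlgebra ℂ (TYGen I) → FreeAlgebra ℂ (TYGen I) → Prop
  | hh (i j : I) (r s : ℕ) : BRel A ⁅TYhodd i r, TYhodd j s⁆ 0
  | hb (i j : I) (r s : ℕ) :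
      BRel A ⁅TYhodd i r, TYb j s⁆ ((2 * (A.al i j : ℂ)) • TYb j (2 * r + s + 1))
  | bb (i j : I) (r s : ℕ) :
      BRel A (⁅TYb i (r + 1), TYb j s⁆ - ⁅TYb i r, TYb j (s + 1)⁆)
        ((-(if i = j then (-1 : ℂ) ^ r + (-1 : ℂ) ^ s else 0)) • TYhnat i (r + s + 1))
  | serre0 (i j : I) (hc : A.c i j = 0) : BRel A ⁅TYb i 0, TYb j 0⁆ 0
  | serre1 (i j : I) (hc : A.c i j = -1) :
      BRel A ⁅TYb i 0, ⁅TYb i 0, TYb j 0⁆⁆ ((-(A.d i : ℂ)) • TYb j 0)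
  | serre2 (i j : I) (hc : A.c i j = -2) :
      BRel A ⁅TYb i 0, ⁅TYb i 0, ⁅TYb i 0, TYb j 0⁆⁆⁆
        (((-4 : ℂ) * (A.d i : ℂ)) • ⁅TYb i 0, TYb j 0⁆)
  | serre3 (i j : I) (hc : A.c i j = -3) :
      BRel A ⁅TYb i 0, ⁅TYb i 0, ⁅TYb i 0, ⁅TYb i 0, TYb j 0⁆⁆⁆⁆
        (((-10 : ℂ) * (A.d i : ℂ)) • ⁅TYb i 0, ⁅TYb i 0, TYb j 0⁆⁆
          + ((-9 : ℂ) * (A.d i : ℂ) ^ 2) • TYb j 0)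

/-- The algebra `𝔅`. -/
abbrev BAlg (A : CartanData I) : Type := RingQuot (BRel A)

/-- The generator `h_{i,2r+1}` of `𝔅`. -/
def hB (A : CartanData I) (i : I) (r : ℕ) : BAlg A :=
  RingQuot.mkAlgHom ℂ (BRel A) (TYhodd i r)

/-- The generator `b_{i,r}` of `𝔅`. -/
def bB (A : CartanData I) (i : I) (r : ℕ) : BAlg A :=
  RingQuot.mkAlgHom ℂ (BRel A) (TYb i r)

end Algebras

/-- Generators `h_{i,1}`, `b_{i,0}`, `b_{i,1}` for the minimalistic presentations. -/
inductive MinGen (I : Type) : Type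
  | h1 : I → MinGen I
  | b0 : I → MinGen I
  | b1 : I → MinGen I

section MinAlgebras

variable {I : Type} [Fintype I] [DecidableEq I]

/-- The generator `h_{i,1}` of the free algebra. -/
def mh (i : I) : FreeAlgebra ℂ (MinGen I) := FreeAlgebra.ι ℂ (MinGen.h1 i)

/-- The generator `b_{i,0}` of the free algebra. -/
def mb0 (i : I) : FreeAlgebra ℂ (MinGen I) := FreeAlgebra.ι ℂ (MinGen.b0 i)

/-- The generator `b_{i,1}` of the free algebra. -/
def mb1 (i : I) : FreeAlgebra ℂ (MinGen I) := FreeAlgebra.ι ℂ (MinGen.b1 i)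

/-- Defining relations of the minimalistic presentation `ᵢY^min`. -/
inductive MinRel (A : CartanData I) : FreeAlgebra ℂ (MinGen I) → FreeAlgebra ℂ (MinGen I) → Prop
  | hh (i j : I) : MinRel A ⁅mh i, mh j⁆ 0
  | hb (i j : I) : MinRel A ⁅mh i, mb0 j⁆ ((2 * (A.al i j : ℂ)) • mb1 j)
  | bb (i j : I) :
      MinRel A (⁅mb1 i, mb0 j⁆ - ⁅mb0 i, mb1 j⁆)
        (((A.al i j : ℂ) / 2) • (mb0 i * mb0 j + mb0 j * mb0 i)
          - (if i = j then (2 : ℂ) else 0) • mh i)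
  | serre0 (i j : I) (hc : A.c i j = 0) : MinRel A ⁅mb0 i, mb0 j⁆ 0
  | serre1 (i j : I) (hc : A.c i j = -1) :
      MinRel A ⁅mb0 i, ⁅mb0 i, mb0 j⁆⁆ ((-(A.d i : ℂ)) • mb0 j)
  | serre2 (i j : I) (hc : A.c i j = -2) :
      MinRel A ⁅mb0 i, ⁅mb0 i, ⁅mb0 i, mb0 j⁆⁆⁆ (((-4 : ℂ) * (A.d i : ℂ)) • ⁅mb0 i, mb0 j⁆)
  | serre3 (i j : I) (hc : A.c i j = -3) :
      MinRel A ⁅mb0 i, ⁅mb0 i, ⁅mb0 i, ⁅mb0 i, mb0 j⁆⁆⁆⁆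
        (((-10 : ℂ) * (A.d i : ℂ)) • ⁅mb0 i, ⁅mb0 i, mb0 j⁆⁆
          + ((-9 : ℂ) * (A.d i : ℂ) ^ 2) • mb0 j)

/-- The relations of `ᵢY^min` together with the additional relation
`[h_{i₀,1},[b_{i₀,1},[h_{i₀,1},b_{i₀,1}]]] = (α_{i₀},α_{i₀})² [b_{i₀,1}², h_{i₀,1}]`. -/
inductive MinRelP (A : CartanData I) (i₀ : I) :
    FreeAlgebra ℂ (MinGen I) → FreeAlgebra ℂ (MinGen I) → Prop
  | base {x y : FreeAlgebra ℂ (MinGen I)} : MinRel A x y → MinRelP A i₀ x y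
  | extra : MinRelP A i₀ ⁅mh i₀, ⁅mb1 i₀, ⁅mh i₀, mb1 i₀⁆⁆⁆
      (((A.al i₀ i₀ : ℂ) ^ 2) • ⁅mb1 i₀ * mb1 i₀, mh i₀⁆)

/-- Defining relations of the algebra `𝒰`. -/
inductive URel (A : CartanData I) : FreeAlgebra ℂ (MinGen I) → FreeAlgebra ℂ (MinGen I) → Prop
  | hh (i j : I) : URel A ⁅mh i, mh j⁆ 0
  | hb (i j : I) : URel A ⁅mh i, mb0 j⁆ ((2 * (A.al i j : ℂ)) • mb1 j)
  | bb (i j : I) :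
      URel A ⁅mb1 i, mb0 j⁆ (⁅mb0 i, mb1 j⁆ - (if i = j then (2 : ℂ) else 0) • mh i)
  | serre0 (i j : I) (hc : A.c i j = 0) : URel A ⁅mb0 i, mb0 j⁆ 0
  | serre1 (i j : I) (hc : A.c i j = -1) :
      URel A ⁅mb0 i, ⁅mb0 i, mb0 j⁆⁆ ((-(A.d i : ℂ)) • mb0 j)
  | serre2 (i j : I) (hc : A.c i j = -2) :
      URel A ⁅mb0 i, ⁅mb0 i, ⁅mb0 i, mb0 j⁆⁆⁆ (((-4 : ℂ) * (A.d i : ℂ)) • ⁅mb0 i, mb0 j⁆)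
  | serre3 (i j : I) (hc : A.c i j = -3) :
      URel A ⁅mb0 i, ⁅mb0 i, ⁅mb0 i, ⁅mb0 i, mb0 j⁆⁆⁆⁆
        (((-10 : ℂ) * (A.d i : ℂ)) • ⁅mb0 i, ⁅mb0 i, mb0 j⁆⁆
          + ((-9 : ℂ) * (A.d i : ℂ) ^ 2) • mb0 j)

/-- The relations of `𝒰` together with the additional relation
`[h_{i₀,1},[b_{i₀,1},[h_{i₀,1},b_{i₀,1}]]] = 0`. -/
inductive URelP (A : CartanData I) (i₀ : I) :
    FreeAlgebra ℂ (MinGen I) → FreeAlgebra ℂ (MinGen I) → Prop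
  | base {x y : FreeAlgebra ℂ (MinGen I)} : URel A x y → URelP A i₀ x y
  | extra : URelP A i₀ ⁅mh i₀, ⁅mb1 i₀, ⁅mh i₀, mb1 i₀⁆⁆⁆ 0

/-- The algebra `𝒰`. -/
abbrev UAlg (A : CartanData I) : Type := RingQuot (URel A)

/-- The generator `h_{i,1}` of `𝒰`. -/
def uH1 (A : CartanData I) (i : I) : UAlg A := RingQuot.mkAlgHom ℂ (URel A) (mh i)

/-- The generator `b_{i,0}` of `𝒰`. -/
def uB0 (A : CartanData I) (i : I) : UAlg A := RingQuot.mkAlgHom ℂ (URel A) (mb0 i)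

/-- The generator `b_{i,1}` of `𝒰`. -/
def uB1 (A : CartanData I) (i : I) : UAlg A := RingQuot.mkAlgHom ℂ (URel A) (mb1 i)

/-- The elements `b_{i,r}` of `𝒰`, defined recursively by
`b_{i,r+1} := (2(α_i,α_i))⁻¹ [h_{i,1}, b_{i,r}]` for `r ≥ 1`. -/
def uB (A : CartanData I) (i : I) : ℕ → UAlg A
  | 0 => uB0 A i
  | 1 => uB1 A i
  | r + 2 => (2 * (A.al i i : ℂ))⁻¹ • ⁅uH1 A i, uB A i (r + 1)⁆

/-- The elements `h_{i,r}` of `𝒰`: `h_{i,0} := 0`, `h_{i,1}` is the generator, and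
`h_{i,r+1} := [b_{i,0}, b_{i,r+1}]` for `r ≥ 1`. -/
def uH (A : CartanData I) (i : I) : ℕ → UAlg A
  | 0 => 0
  | 1 => uH1 A i
  | r + 2 => ⁅uB0 A i, uB A i (r + 2)⁆

end MinAlgebras

/-! Write `D(r,s) = [b_{i,r+1}, b_{j,s}] - [b_{i,r}, b_{j,s+1}]`. As the `h_{k,1}` commute, `ad h_{k,1}`
commutes with `ad h_{j,1}` and therefore acts on every `b_{j,s}` as on `b_{j,0}`:
`[h_{k,1}, b_{j,s}] = 2(α_k,α_j) b_{j,s+1}`. Hence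
`[h_{k,1}, D(r,s)] = 2(α_k,α_i) D(r+1,s) + 2(α_k,α_j) D(r,s+1)`. The relation `D(0,0) = 0` is a
defining one, and if `D(r,s) = 0`, taking `k = i` and `k = j` gives a linear system for
`D(r+1,s)` and `D(r,s+1)` with determinant `4((α_i,α_i)(α_j,α_j) - (α_i,α_j)(α_j,α_i)) ≠ 0`, so both
vanish. -/

theorem eq_zero_and_eq_zero_of_det_ne_zero {K M : Type*} [Field K] [AddCommGroup M] [Module K M]
    {a b c d : K} {u v : M} (h₁ : a • u + b • v = 0) (h₂ : c • u + d • v = 0)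
    (hdet : a * d - b * c ≠ 0) : u = 0 ∧ v = 0 := by
  have hu : (a * d - b * c) • u = 0 := by
    linear_combination (norm := module) d • h₁ - b • h₂
  have hv : (a * d - b * c) • v = 0 := by
    linear_combination (norm := module) a • h₂ - c • h₁
  exact ⟨(smul_eq_zero.mp hu).resolve_left hdet, (smul_eq_zero.mp hv).resolve_left hdet⟩

section LieBracket

attribute [local instance] LieRing.ofAssociativeRing

theorem RingQuot.mkAlgHom_lie {R B : Type*} [CommRing R] [Ring B] [Algebra R B]
    (rel : B → B → Prop) (x y : B) :
    mkAlgHom R rel ⁅x, y⁆ = ⁅mkAlgHom R rel x, mkAlgHom R rel y⁆ :=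
  (mkAlgHom R rel).toLieHom.map_lie x y

end LieBracket

namespace CartanData

variable {I : Type} [Fintype I] (A : CartanData I)

theorem al_self (i : I) : A.al i i = 2 * A.d i := by
  rw [al, A.c_diag i]
  push_cast
  ring

theorem two_mul_al_self_ne_zero (i : I) : (2 * A.al i i : ℂ) ≠ 0 := by
  have hpos : 0 < 2 * A.al i i := by
    rw [al_self]
    linarith [A.d_pos i]
  exact_mod_cast hpos.ne'

theorem al_det_pos {i j : I} (hij : i ≠ j) : 0 < A.al i i * A.al j j - A.al i j * A.al j i := by
  have hc : (A.c i j : ℝ) * A.c j i ≤ 3 := by exact_mod_cast A.c_bound i j hij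
  have hdet : A.al i i * A.al j j - A.al i j * A.al j i
      = A.d i * A.d j * (4 - (A.c i j : ℝ) * A.c j i) := by
    simp only [al, A.c_diag]
    push_cast
    ring
  have hdi := A.d_pos i
  have hdj := A.d_pos j
  have hfour : (0 : ℝ) < 4 - (A.c i j : ℝ) * A.c j i := by linarith
  rw [hdet]
  positivity

end CartanData

section UAlg

variable {I : Type} [Fintype I] [DecidableEq I] (A : CartanData I)

attribute [local instance] LieRing.ofAssociativeRing

/-- `rw [lie_smul]` does not fire on `UAlg A`: the scalar action of `RingQuot` is not reducibly
the one `LieAlgebra.ofAssociativeAlgebra` sees. -/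
theorem uAlg_lie_smul (c : ℂ) (x y : UAlg A) : ⁅x, c • y⁆ = c • ⁅x, y⁆ := lie_smul c x y

theorem uAlg_smul_lie (c : ℂ) (x y : UAlg A) : ⁅c • x, y⁆ = c • ⁅x, y⁆ := smul_lie c x y

theorem uH1_lie_uH1 (i j : I) : ⁅uH1 A i, uH1 A j⁆ = 0 := by
  have h := RingQuot.mkAlgHom_rel ℂ (URel.hh (A := A) i j)
  rw [RingQuot.mkAlgHom_lie, map_zero] at h
  exact h

theorem uH1_lie_uB_zero (i j : I) :
    ⁅uH1 A i, uB A j 0⁆ = (2 * (A.al i j : ℂ)) • uB A j 1 := by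
  have h := RingQuot.mkAlgHom_rel ℂ (URel.hb (A := A) i j)
  rw [RingQuot.mkAlgHom_lie, map_smul] at h
  exact h

theorem uB_one_lie_uB_zero {i j : I} (hij : i ≠ j) :
    ⁅uB A i 1, uB A j 0⁆ = ⁅uB A i 0, uB A j 1⁆ := by
  have h := RingQuot.mkAlgHom_rel ℂ (URel.bb (A := A) i j)
  rw [if_neg hij, zero_smul, sub_zero, RingQuot.mkAlgHom_lie, RingQuot.mkAlgHom_lie] at h
  exact h

theorem uH1_lie_uB_self (i : I) :
    ∀ s : ℕ, ⁅uH1 A i, uB A i s⁆ = (2 * (A.al i i : ℂ)) • uB A i (s + 1)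
  | 0 => uH1_lie_uB_zero A i i
  | s + 1 => by rw [uB, smul_smul, mul_inv_cancel₀ (A.two_mul_al_self_ne_zero i), one_smul]

theorem uH1_lie_uB (i j : I) :
    ∀ s : ℕ, ⁅uH1 A i, uB A j s⁆ = (2 * (A.al i j : ℂ)) • uB A j (s + 1)
  | 0 => uH1_lie_uB_zero A i j
  | s + 1 => by
    rw [← smul_right_inj (A.two_mul_al_self_ne_zero j), ← uAlg_lie_smul,
      ← uH1_lie_uB_self A j s, leibniz_lie, uH1_lie_uH1, zero_lie, zero_add,
      uH1_lie_uB i j s, uAlg_lie_smul, uH1_lie_uB_self A j (s + 1), smul_smul, smul_smul,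
      mul_comm]

theorem uH1_lie_lie_uB (k i j : I) (p q : ℕ) :
    ⁅uH1 A k, ⁅uB A i p, uB A j q⁆⁆
      = (2 * (A.al k i : ℂ)) • ⁅uB A i (p + 1), uB A j q⁆
        + (2 * (A.al k j : ℂ)) • ⁅uB A i p, uB A j (q + 1)⁆ := by
  rw [leibniz_lie, uH1_lie_uB, uH1_lie_uB, uAlg_smul_lie, uAlg_lie_smul]

def uShiftDefect (i j : I) (r s : ℕ) : UAlg A :=
  ⁅uB A i (r + 1), uB A j s⁆ - ⁅uB A i r, uB A j (s + 1)⁆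

theorem uH1_lie_uShiftDefect (k i j : I) (r s : ℕ) :
    ⁅uH1 A k, uShiftDefect A i j r s⁆
      = (2 * (A.al k i : ℂ)) • uShiftDefect A i j (r + 1) s
        + (2 * (A.al k j : ℂ)) • uShiftDefect A i j r (s + 1) := by
  simp only [uShiftDefect, lie_sub, uH1_lie_lie_uB, smul_sub]
  abel

theorem uShiftDefect_succ_eq_zero {i j : I} (hij : i ≠ j) {r s : ℕ}
    (h : uShiftDefect A i j r s = 0) :
    uShiftDefect A i j (r + 1) s = 0 ∧ uShiftDefect A i j r (s + 1) = 0 := by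
  have hi := uH1_lie_uShiftDefect A i i j r s
  have hj := uH1_lie_uShiftDefect A j i j r s
  rw [h, lie_zero] at hi hj
  refine eq_zero_and_eq_zero_of_det_ne_zero hi.symm hj.symm ?_
  have hdet : (A.al i i * A.al j j - A.al i j * A.al j i : ℂ) ≠ 0 := by
    exact_mod_cast (A.al_det_pos hij).ne'
  intro h0
  exact hdet (by linear_combination h0 / 4)

theorem uShiftDefect_eq_zero {i j : I} (hij : i ≠ j) : ∀ r s : ℕ, uShiftDefect A i j r s = 0
  | 0, 0 => sub_eq_zero.mpr (uB_one_lie_uB_zero A hij)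
  | 0, s + 1 => (uShiftDefect_succ_eq_zero A hij (uShiftDefect_eq_zero hij 0 s)).2
  | r + 1, s => (uShiftDefect_succ_eq_zero A hij (uShiftDefect_eq_zero hij r s)).1

end UAlg

theorem U_bb_shift_general
    {I : Type} [Fintype I] [DecidableEq I] (A : CartanData I)
    (i j : I) (hne : i ≠ j) (r s : ℕ) :
    ⁅uB A i (r + 1), uB A j s⁆ = ⁅uB A i r, uB A j (s + 1)⁆ :=
  sub_eq_zero.mp (uShiftDefect_eq_zero A hne r s)

/-- in `𝒰`, for `i ≠ j`, `[b_{i,r+1}, b_{j,s}] = [b_{i,r}, b_{j,s+1}]`. -/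
theorem U_bb_shift
    {I : Type} [Fintype I] [DecidableEq I] [Nonempty I] (A : CartanData I)
    (i j : I) (hne : i ≠ j) (r s : ℕ) :
    ⁅uB A i (r + 1), uB A j s⁆ = ⁅uB A i r, uB A j (s + 1)⁆ :=
  U_bb_shift_general A i j hne r s
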